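/- Define the Pinocchio set 𝒫_T = B_1(0) ∪ ⋃_{τ ∈ [0,T]} B_{r₀}((cos θ₀ + τ, 0)) ⊂ ℝ² for fixed θ₀ ∈ (0, π/2), r₀ = sin θ₀, and T ≥ 0. Then |𝒫_T| = |𝒫_0| + 2r₀T and P(𝒫_T) = P(𝒫_0) + 2T; consequently if P(𝒫_0)/|𝒫_0| = 1/r₀ then P(𝒫_T)/|𝒫_T| = 1/r₀ for all T ≥ 0. -/

import Mathlib

/-!
Cut the plane along the vertical line `x = cos θ₀`, where the small circle meets the unit circle
(at `(cos θ₀, ± sin θ₀)`). Left of the cut `𝒫_T` coincides with `𝒫_0`, right of the strip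
`cos θ₀ ≤ x ≤ cos θ₀ + T` it is `𝒫_0` translated by `T`, and inside the strip it is the rectangle
`[cos θ₀, cos θ₀ + T] × (-r₀, r₀)`. Frontiers are local, so the boundary has the same three-part
structure, its middle part being the two horizontal sides of the rectangle. Area and `μH[1]` are
translation invariant and the line `x = cos θ₀` is negligible for `𝒫_0` and its boundary, so `𝒫_T`
gains exactly the area `2 r₀ T` and the length `2 T`; these increments are themselves in ratio
`1 / r₀`, so that ratio is preserved.
-/

open MeasureTheory

local notation "E2" => EuclideanSpace ℝ (Fin 2)

noncomputable def pinocchio (θ₀ T : ℝ) : Set E2 :=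
  Metric.ball (0 : E2) 1 ∪
    ⋃ τ ∈ Set.Icc (0 : ℝ) T,
      Metric.ball ((WithLp.equiv 2 (Fin 2 → ℝ)).symm ![Real.cos θ₀ + τ, 0])
        (Real.sin θ₀)

open Set Metric Real
open scoped ENNReal

lemma dist_sq_eq_fin_two (p q : E2) : dist p q ^ 2 = (p 0 - q 0) ^ 2 + (p 1 - q 1) ^ 2 := by
  rw [EuclideanSpace.dist_eq, Real.sq_sqrt (by positivity), Fin.sum_univ_two, Real.dist_eq,
    Real.dist_eq, sq_abs, sq_abs]

lemma mem_ball_iff_fin_two {p q : E2} {ρ : ℝ} (hρ : 0 ≤ ρ) :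
    p ∈ ball q ρ ↔ (p 0 - q 0) ^ 2 + (p 1 - q 1) ^ 2 < ρ ^ 2 := by
  rw [mem_ball, ← dist_sq_eq_fin_two, pow_lt_pow_iff_left₀ dist_nonneg hρ two_ne_zero]

lemma mem_closedBall_iff_fin_two {p q : E2} {ρ : ℝ} (hρ : 0 ≤ ρ) :
    p ∈ closedBall q ρ ↔ (p 0 - q 0) ^ 2 + (p 1 - q 1) ^ 2 ≤ ρ ^ 2 := by
  rw [mem_closedBall, ← dist_sq_eq_fin_two, pow_le_pow_iff_left₀ dist_nonneg hρ two_ne_zero]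

lemma isometry_horizontal (b : ℝ) : Isometry (fun t : ℝ => !₂[t, b]) :=
  Isometry.of_dist_eq fun s t => by
    rw [← sq_eq_sq₀ dist_nonneg dist_nonneg, dist_sq_eq_fin_two, Real.dist_eq, sq_abs]
    simp

lemma hausdorffMeasure_image_horizontal (b : ℝ) (s : Set ℝ) :
    μH[1] ((fun t : ℝ => !₂[t, b]) '' s) = volume s := by
  rw [(isometry_horizontal b).hausdorffMeasure_image (Or.inl zero_le_one), hausdorffMeasure_real]

lemma volume_setOf_fin_two (I J : Set ℝ) :
    volume {p : E2 | p 0 ∈ I ∧ p 1 ∈ J} = volume I * volume J := by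
  have : {p : E2 | p 0 ∈ I ∧ p 1 ∈ J} =
      (MeasurableEquiv.toLp 2 (Fin 2 → ℝ)).symm ⁻¹' univ.pi ![I, J] := by
    ext p
    simp [Fin.forall_fin_two]
  rw [this,
    (EuclideanSpace.volume_preserving_symm_measurableEquiv_toLp (Fin 2)).measure_preimage_equiv,
    volume_pi_pi, Fin.prod_univ_two]
  rfl

theorem closure_biUnion_ball_subset {α β : Type*} [PseudoMetricSpace α] [TopologicalSpace β]
    {K : Set β} (hK : IsCompact K) {f : β → α} (hf : ContinuousOn f K) {δ : ℝ} (hδ : 0 ≤ δ) :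
    closure (⋃ x ∈ K, ball (f x) δ) ⊆ ⋃ x ∈ K, closedBall (f x) δ :=
  calc closure (⋃ x ∈ K, ball (f x) δ) = closure (thickening δ (f '' K)) := by
        rw [thickening_eq_biUnion_ball, biUnion_image]
    _ ⊆ cthickening δ (f '' K) := closure_thickening_subset_cthickening _ _
    _ = ⋃ x ∈ K, closedBall (f x) δ := by
        rw [(hK.image_of_continuousOn hf).cthickening_eq_biUnion_closedBall hδ, biUnion_image]

lemma frontier_inter_eq_of_inter_eq {X : Type*} [TopologicalSpace X] {s t u : Set X}
    (hu : IsOpen u) (h : s ∩ u = t ∩ u) : frontier s ∩ u = frontier t ∩ u := by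
  rw [← frontier_inter_open_inter hu, h, frontier_inter_open_inter hu]

lemma measure_eq_left_add_strip_add_right (μ : Measure E2) (s : Set E2) {a b : ℝ} (hab : a ≤ b) :
    μ s = μ (s ∩ {p | p 0 < a}) + μ (s ∩ {p | p 0 ∈ Icc a b}) + μ (s ∩ {p | b < p 0}) := by
  rw [← measure_inter_add_sdiff s (by measurability : MeasurableSet {p : E2 | p 0 < a}),
    ← measure_inter_add_sdiff (s \ _) (by measurability : MeasurableSet {p : E2 | p 0 ≤ b}),
    add_assoc]
  congr 3 <;> ext p <;> grind

lemma image_add_inter_halfplane (T c : ℝ) (B : Set E2) :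
    (· + !₂[T, 0]) '' B ∩ {p | c + T < p 0} = (· + !₂[T, 0]) '' (B ∩ {p | c < p 0}) := by
  rw [image_add_right, image_add_right, preimage_inter]
  congr 1
  ext p
  simp

/-- `A` arises from `B` by cutting along the line `x = c` and sliding the right half by `T`;
nothing is required of `A` in the strip `c ≤ x ≤ c + T`. -/
def IsStretchOf (c T : ℝ) (A B : Set E2) : Prop :=
  A ∩ {p | p 0 < c} = B ∩ {p | p 0 < c} ∧
    A ∩ {p | c + T < p 0} = (· + !₂[T, 0]) '' B ∩ {p | c + T < p 0}

namespace IsStretchOf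

variable {c T : ℝ} {A B : Set E2}

lemma frontier (h : IsStretchOf c T A B) : IsStretchOf c T (frontier A) (frontier B) := by
  refine ⟨frontier_inter_eq_of_inter_eq (isOpen_lt (by fun_prop) continuous_const) h.1, ?_⟩
  rw [frontier_inter_eq_of_inter_eq (isOpen_lt continuous_const (by fun_prop)) h.2]
  exact congrArg (· ∩ _) ((Homeomorph.addRight !₂[T, 0]).image_frontier B).symm

lemma measure_eq_add (μ : Measure E2) [μ.IsAddRightInvariant] (hT : 0 ≤ T)
    (h : IsStretchOf c T A B) (hline : μ (B ∩ {p | p 0 = c}) = 0) :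
    μ A = μ B + μ (A ∩ {p | p 0 ∈ Icc c (c + T)}) := by
  have hB := measure_eq_left_add_strip_add_right μ B (le_refl c)
  simp only [Icc_self, mem_singleton_iff, hline, add_zero] at hB
  have hright : μ (A ∩ {p | c + T < p 0}) = μ (B ∩ {p | c < p 0}) := by
    rw [h.2, image_add_inter_halfplane, image_add_right, measure_preimage_add_right]
  rw [measure_eq_left_add_strip_add_right μ A (le_add_of_nonneg_right hT), h.1, hright, hB]
  ring

end IsStretchOf

lemma pinocchio_eq (θ T : ℝ) :
    pinocchio θ T = ball 0 1 ∪ ⋃ τ ∈ Icc 0 T, ball !₂[cos θ + τ, 0] (sin θ) := rfl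

lemma isOpen_pinocchio (θ T : ℝ) : IsOpen (pinocchio θ T) :=
  isOpen_ball.union (isOpen_biUnion fun _ _ => isOpen_ball)

section Pinocchio

variable {θ T : ℝ} {p : E2}

lemma mem_pinocchio_iff (hs : 0 ≤ sin θ) :
    p ∈ pinocchio θ T ↔
      p 0 ^ 2 + p 1 ^ 2 < 1 ∨ ∃ τ ∈ Icc 0 T, (p 0 - (cos θ + τ)) ^ 2 + p 1 ^ 2 < sin θ ^ 2 := by
  simp [pinocchio_eq, mem_ball_iff_fin_two hs, mem_ball_iff_fin_two zero_le_one]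

lemma mem_pinocchio_of_lt_cos (hs : 0 ≤ sin θ) (hT : 0 ≤ T) (hx : p 0 < cos θ) :
    p ∈ pinocchio θ T ↔ p 0 ^ 2 + p 1 ^ 2 < 1 ∨ (p 0 - cos θ) ^ 2 + p 1 ^ 2 < sin θ ^ 2 := by
  rw [mem_pinocchio_iff hs]
  refine or_congr_right ⟨fun ⟨τ, ⟨hτ, _⟩, h⟩ => by nlinarith, fun h => ⟨0, ⟨le_rfl, hT⟩, by simpa⟩⟩

lemma mem_pinocchio_of_mem_Icc (hc : 0 ≤ cos θ) (hs : 0 ≤ sin θ)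
    (hx : p 0 ∈ Icc (cos θ) (cos θ + T)) : p ∈ pinocchio θ T ↔ p 1 ^ 2 < sin θ ^ 2 := by
  have := cos_sq_add_sin_sq θ
  rw [mem_pinocchio_iff hs]
  refine ⟨?_, fun h => Or.inr ⟨p 0 - cos θ, ⟨by linarith [hx.1], by linarith [hx.2]⟩, by simpa⟩⟩
  rintro (h | ⟨τ, -, h⟩) <;> nlinarith [hx.1]

lemma mem_pinocchio_of_lt (hc : 0 ≤ cos θ) (hs : 0 ≤ sin θ) (hT : 0 ≤ T)
    (hx : cos θ + T < p 0) :
    p ∈ pinocchio θ T ↔ (p 0 - (cos θ + T)) ^ 2 + p 1 ^ 2 < sin θ ^ 2 := by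
  have := cos_sq_add_sin_sq θ
  rw [mem_pinocchio_iff hs]
  refine ⟨?_, fun h => Or.inr ⟨T, ⟨hT, le_rfl⟩, h⟩⟩
  rintro (h | ⟨τ, ⟨hτ, hτT⟩, h⟩) <;> nlinarith

lemma isStretchOf_pinocchio (hc : 0 ≤ cos θ) (hs : 0 ≤ sin θ) (hT : 0 ≤ T) :
    IsStretchOf (cos θ) T (pinocchio θ T) (pinocchio θ 0) := by
  constructor <;> ext p <;> refine and_congr_left fun hx => ?_
  · rw [mem_pinocchio_of_lt_cos hs hT hx, mem_pinocchio_of_lt_cos hs le_rfl hx]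
  · have hx' : cos θ + 0 < (p + -!₂[T, 0]) 0 := by simpa using hx
    rw [image_add_right, mem_preimage, mem_pinocchio_of_lt hc hs hT hx,
      mem_pinocchio_of_lt hc hs le_rfl hx']
    simp only [PiLp.add_apply, PiLp.neg_apply, Matrix.cons_val_zero, Matrix.cons_val_one,
      Matrix.cons_val_fin_one, add_zero, neg_zero]
    ring_nf

lemma volume_pinocchio_inter_strip (hc : 0 ≤ cos θ) (hs : 0 ≤ sin θ) (hT : 0 ≤ T) :
    volume (pinocchio θ T ∩ {p | p 0 ∈ Icc (cos θ) (cos θ + T)}) =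
      ENNReal.ofReal (2 * sin θ * T) := by
  have : pinocchio θ T ∩ {p | p 0 ∈ Icc (cos θ) (cos θ + T)} =
      {p | p 0 ∈ Icc (cos θ) (cos θ + T) ∧ p 1 ∈ Ioo (-sin θ) (sin θ)} := by
    ext p
    rw [mem_inter_iff, and_comm]
    refine and_congr_right fun hx => ?_
    rw [mem_pinocchio_of_mem_Icc hc hs hx, mem_Ioo, ← abs_lt, sq_lt_sq, abs_of_nonneg hs]
  rw [this, volume_setOf_fin_two, Real.volume_Icc, Real.volume_Ioo,
    ← ENNReal.ofReal_mul (by linarith)]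
  ring_nf

lemma closure_pinocchio_subset (hs : 0 ≤ sin θ) :
    closure (pinocchio θ T) ⊆
      closedBall 0 1 ∪ ⋃ τ ∈ Icc 0 T, closedBall !₂[cos θ + τ, 0] (sin θ) := by
  rw [pinocchio_eq, closure_union, closure_ball _ one_ne_zero]
  exact union_subset_union_right _
    (closure_biUnion_ball_subset isCompact_Icc (f := fun τ => !₂[cos θ + τ, 0]) (by fun_prop) hs)

lemma mem_frontier_pinocchio_of_mem_Icc (hc : 0 ≤ cos θ) (hs : 0 < sin θ)
    (hx : p 0 ∈ Icc (cos θ) (cos θ + T)) :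
    p ∈ frontier (pinocchio θ T) ↔ p 1 ^ 2 = sin θ ^ 2 := by
  rw [(isOpen_pinocchio θ T).frontier_eq, mem_sdiff, mem_pinocchio_of_mem_Icc hc hs.le hx, not_lt]
  refine ⟨fun ⟨hcl, hge⟩ => le_antisymm ?_ hge, fun h => ⟨?_, h.ge⟩⟩
  · rcases closure_pinocchio_subset hs.le hcl with h | h
    · rw [mem_closedBall_iff_fin_two zero_le_one] at h
      simp only [PiLp.zero_apply, sub_zero, one_pow] at h
      nlinarith [hx.1, cos_sq_add_sin_sq θ]
    · obtain ⟨τ, -, h⟩ := mem_iUnion₂.1 h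
      rw [mem_closedBall_iff_fin_two hs.le] at h
      simp only [Matrix.cons_val_zero, Matrix.cons_val_one, Matrix.cons_val_fin_one,
        sub_zero] at h
      nlinarith
  · have hball : ball !₂[p 0, 0] (sin θ) ⊆ pinocchio θ T := by
      rw [pinocchio_eq]
      refine subset_union_of_subset_right ?_ _
      simpa only [add_sub_cancel] using
        subset_biUnion_of_mem (u := fun τ => ball !₂[cos θ + τ, 0] (sin θ))
          (show p 0 - cos θ ∈ Icc 0 T from ⟨by linarith [hx.1], by linarith [hx.2]⟩)
    refine closure_mono hball ?_
    rw [closure_ball _ hs.ne', mem_closedBall_iff_fin_two hs.le]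
    simp [h]

lemma frontier_pinocchio_inter_strip (hc : 0 ≤ cos θ) (hs : 0 < sin θ) :
    frontier (pinocchio θ T) ∩ {p | p 0 ∈ Icc (cos θ) (cos θ + T)} =
      (fun t => !₂[t, sin θ]) '' Icc (cos θ) (cos θ + T) ∪
        (fun t => !₂[t, -sin θ]) '' Icc (cos θ) (cos θ + T) := by
  ext p
  constructor
  · rintro ⟨hp, hx⟩
    rw [mem_frontier_pinocchio_of_mem_Icc hc hs hx, sq_eq_sq_iff_eq_or_eq_neg] at hp
    refine hp.imp (fun h => ⟨p 0, hx, ?_⟩) (fun h => ⟨p 0, hx, ?_⟩) <;>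
      ext i <;> fin_cases i <;> simp [h]
  · rintro (⟨t, ht, rfl⟩ | ⟨t, ht, rfl⟩) <;>
      exact ⟨(mem_frontier_pinocchio_of_mem_Icc hc hs (by simpa)).2 (by simp), by simpa⟩

lemma hausdorffMeasure_frontier_pinocchio_inter_strip (hc : 0 ≤ cos θ) (hs : 0 < sin θ)
    (hT : 0 ≤ T) :
    μH[1] (frontier (pinocchio θ T) ∩ {p | p 0 ∈ Icc (cos θ) (cos θ + T)}) =
      ENNReal.ofReal (2 * T) := by
  have hdisj : Disjoint ((fun t => !₂[t, sin θ]) '' Icc (cos θ) (cos θ + T))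
      ((fun t => !₂[t, -sin θ]) '' Icc (cos θ) (cos θ + T)) := by
    rw [disjoint_left]
    rintro _ ⟨s, -, rfl⟩ ⟨t, -, h⟩
    have : -sin θ = sin θ := by simpa using congrArg (· 1) h
    linarith
  rw [frontier_pinocchio_inter_strip hc hs, measure_union hdisj
    (isCompact_Icc.image (by fun_prop)).isClosed.measurableSet,
    hausdorffMeasure_image_horizontal, hausdorffMeasure_image_horizontal, Real.volume_Icc,
    ← ENNReal.ofReal_add (by linarith) (by linarith)]
  ring_nf

end Pinocchio

lemma toReal_add_div_toReal_add_eq {a b : ℝ≥0∞} {r x : ℝ} (hr : 0 < r) (hx : 0 ≤ x)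
    (h : a.toReal / b.toReal = 1 / r) :
    (a + ENNReal.ofReal x).toReal / (b + ENNReal.ofReal (r * x)).toReal = 1 / r := by
  -- `y / 0 = 0` and `⊤.toReal = 0`, so `h` forces `a` and `b` to be finite and nonzero.
  have ha : a.toReal ≠ 0 := fun h0 => by simp [h0, hr.ne] at h
  have hb : b.toReal ≠ 0 := fun h0 => by simp [h0, hr.ne] at h
  have hb' : 0 < b.toReal := ENNReal.toReal_nonneg.lt_of_ne' hb
  rw [ENNReal.toReal_add (ENNReal.toReal_ne_zero.1 ha).2 ENNReal.ofReal_ne_top,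
    ENNReal.toReal_add (ENNReal.toReal_ne_zero.1 hb).2 ENNReal.ofReal_ne_top,
    ENNReal.toReal_ofReal hx, ENNReal.toReal_ofReal (by positivity)]
  rw [div_eq_div_iff hb hr.ne'] at h
  rw [div_eq_div_iff (by positivity) hr.ne']
  linear_combination h

/-- `|𝒫_T| = |𝒫_0| + 2r₀T` and `P(𝒫_T) = P(𝒫_0) + 2T`; consequently
if `P(𝒫_0)/|𝒫_0| = 1/r₀`, then `P(𝒫_T)/|𝒫_T| = 1/r₀` for all `T ≥ 0`. -/
theorem pinocchio_ratio (θ₀ : ℝ) (hθ : θ₀ ∈ Set.Ioo 0 (Real.pi / 2))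
    (r₀ : ℝ) (hr : r₀ = Real.sin θ₀) (T : ℝ) (hT : 0 ≤ T) :
    volume (pinocchio θ₀ T) =
      volume (pinocchio θ₀ 0) + ENNReal.ofReal (2 * r₀ * T) ∧
    μH[1] (frontier (pinocchio θ₀ T)) =
      μH[1] (frontier (pinocchio θ₀ 0)) + ENNReal.ofReal (2 * T) ∧
    ((μH[1] (frontier (pinocchio θ₀ 0))).toReal /
        (volume (pinocchio θ₀ 0)).toReal = 1 / r₀ →
      (μH[1] (frontier (pinocchio θ₀ T))).toReal /
        (volume (pinocchio θ₀ T)).toReal = 1 / r₀) := by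
  obtain ⟨hθ0, hθ1⟩ := hθ
  have hc : 0 < cos θ₀ := cos_pos_of_mem_Ioo ⟨by linarith [pi_pos], hθ1⟩
  have hs : 0 < sin θ₀ := sin_pos_of_pos_of_lt_pi hθ0 (by linarith [pi_pos])
  have hstretch := isStretchOf_pinocchio hc.le hs.le hT
  have hvol : volume (pinocchio θ₀ T) =
      volume (pinocchio θ₀ 0) + ENNReal.ofReal (2 * r₀ * T) := by
    rw [hstretch.measure_eq_add volume hT, volume_pinocchio_inter_strip hc.le hs.le hT, hr]
    simpa using volume_pinocchio_inter_strip (T := 0) hc.le hs.le le_rfl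
  have hper : μH[1] (frontier (pinocchio θ₀ T)) =
      μH[1] (frontier (pinocchio θ₀ 0)) + ENNReal.ofReal (2 * T) := by
    rw [hstretch.frontier.measure_eq_add μH[1] hT,
      hausdorffMeasure_frontier_pinocchio_inter_strip hc.le hs hT]
    simpa using hausdorffMeasure_frontier_pinocchio_inter_strip (T := 0) hc.le hs le_rfl
  refine ⟨hvol, hper, fun h => ?_⟩
  rw [hvol, hper, show 2 * r₀ * T = r₀ * (2 * T) by ring]
  exact toReal_add_div_toReal_add_eq (hr ▸ hs) (by linarith) h
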